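/- arXiv:1905.05455 — 4 statements merged into one kernel-verified Lean document; each statement's English description precedes it below -/
import Mathlib

section
/- Let f, g : ℝ → ℝ be continuous on [0,1]-type domains and n, p natural numbers. Then ∫₀¹ ∫₀¹ s^n · t^p · f(s) · g(s + t(1-s)) · (1-s) ds dt = ∫₀¹ ∫₀¹ (s')^n · (t')^(n+p) · ((1-s')/(1-s't'))^p · f(s't') · g(t') · t' ds' dt', where both sides are interpreted as iterated integrals over the unit square (and the integrand on the right is extended by continuity at s't' = 1). -/
/-!
After exchanging the two integrals on the left, the substitution `u = s + t (1 - s)` in the inner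
integral absorbs the factor `1 - s` and leaves the kernel `s ^ n ((u - s) / (1 - s)) ^ p f s g u`
on the triangle `0 < s < u ≤ 1`. Exchanging the order of integration over the triangle and
substituting `s = s' u` in the new inner integral gives the right side. The kernel is
discontinuous at the corner `s = u = 1` but bounded, which is all Fubini needs.
-/

open intervalIntegral MeasureTheory Set Function

theorem intervalIntegral_intervalIntegral_swap_triangle {E : Type*} [NormedAddCommGroup E]
    [NormedSpace ℝ E] {F : ℝ → ℝ → E} {a b : ℝ} (hab : a ≤ b)
    (hF : IntegrableOn (uncurry F) {q : ℝ × ℝ | a < q.1 ∧ q.1 < q.2 ∧ q.2 ≤ b}) :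
    ∫ x in a..b, ∫ y in x..b, F x y = ∫ y in a..b, ∫ x in a..y, F x y := by
  set K : ℝ → ℝ → E := fun x y => (Ioi x).indicator (F x) y
  have hK : uncurry K = {q : ℝ × ℝ | q.1 < q.2}.indicator (uncurry F) := by
    ext ⟨x, y⟩; simp [K, indicator_apply]
  have hK_int : IntegrableOn (uncurry K) (uIoc a b ×ˢ uIoc a b) := by
    rw [hK, IntegrableOn, integrable_indicator_iff (measurableSet_lt measurable_fst measurable_snd),
      IntegrableOn, Measure.restrict_restrict (measurableSet_lt measurable_fst measurable_snd),
      uIoc_of_le hab]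
    exact hF.mono_set fun q ⟨hxy, ⟨hax, _⟩, _, hyb⟩ => ⟨hax, hxy, hyb⟩
  calc ∫ x in a..b, ∫ y in x..b, F x y = ∫ x in a..b, ∫ y in a..b, K x y := by
        refine integral_congr fun x hx => ?_
        rw [uIcc_of_le hab] at hx
        rw [integral_of_le hx.2, integral_of_le hab, setIntegral_indicator measurableSet_Ioi,
          Ioc_inter_Ioi, max_eq_right hx.1]
    _ = ∫ y in a..b, ∫ x in a..b, K x y := intervalIntegral_intervalIntegral_swap hK_int
    _ = ∫ y in a..b, ∫ x in a..y, F x y := by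
        refine integral_congr fun y hy => ?_
        rw [uIcc_of_le hab] at hy
        have hK_y : (fun x => K x y) = (Iio y).indicator (fun x => F x y) := by
          ext x; simp [K, indicator_apply]
        have hIoo : Ioc a b ∩ Iio y = Ioo a y := by
          ext x; simp only [mem_inter_iff, mem_Ioc, mem_Iio, mem_Ioo]; grind
        rw [integral_of_le hy.1, integral_of_le hab, hK_y, setIntegral_indicator measurableSet_Iio,
          hIoo, integral_Ioc_eq_integral_Ioo]

noncomputable def triangleKernel (f g : ℝ → ℝ) (n p : ℕ) (s u : ℝ) : ℝ :=
  s ^ n * ((u - s) / (1 - s)) ^ p * f s * g u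

section

variable {f g : ℝ → ℝ} (n p : ℕ)

theorem integral_affine_comp_eq_integral_triangleKernel (s : ℝ) :
    ∫ t in (0:ℝ)..1, s ^ n * t ^ p * f s * g (s + t * (1 - s)) * (1 - s)
      = ∫ u in s..1, triangleKernel f g n p s u := by
  have key : ∀ t, s ^ n * t ^ p * f s * g (s + t * (1 - s)) * (1 - s)
      = (1 - s) * triangleKernel f g n p s (s + (1 - s) * t) := by
    intro t
    rcases eq_or_ne s 1 with rfl | hs
    · simp
    · simp only [triangleKernel, show s + (1 - s) * t - s = t * (1 - s) by ring,
        mul_div_cancel_right₀ _ (sub_ne_zero.2 hs.symm)]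
      ring_nf
  simp_rw [key]
  rw [intervalIntegral.integral_const_mul, ← smul_eq_mul, smul_integral_comp_add_mul]
  norm_num

theorem integral_triangleKernel_eq_integral_mul_comp (u : ℝ) :
    ∫ s in (0:ℝ)..u, triangleKernel f g n p s u
      = ∫ s' in (0:ℝ)..1, s' ^ n * u ^ (n + p) * ((1 - s') / (1 - s' * u)) ^ p
          * f (s' * u) * g u * u := by
  have key : ∀ s', s' ^ n * u ^ (n + p) * ((1 - s') / (1 - s' * u)) ^ p * f (s' * u) * g u * u
      = u * triangleKernel f g n p (s' * u) u := by
    intro s'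
    simp only [triangleKernel, show u - s' * u = u * (1 - s') by ring, mul_div_assoc, mul_pow u]
    ring
  simp_rw [key]
  rw [intervalIntegral.integral_const_mul, ← smul_eq_mul,
    smul_integral_comp_mul_right (triangleKernel f g n p · u)]
  norm_num

theorem integrableOn_triangleKernel (hf : Continuous f) (hg : Continuous g) :
    IntegrableOn (uncurry (triangleKernel f g n p))
      {q : ℝ × ℝ | 0 < q.1 ∧ q.1 < q.2 ∧ q.2 ≤ 1} := by
  obtain ⟨Mf, hMf⟩ := isCompact_Icc.exists_bound_of_continuousOn (hf.continuousOn (s := Icc 0 1))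
  obtain ⟨Mg, hMg⟩ := isCompact_Icc.exists_bound_of_continuousOn (hg.continuousOn (s := Icc 0 1))
  have hT : {q : ℝ × ℝ | 0 < q.1 ∧ q.1 < q.2 ∧ q.2 ≤ 1} ⊆ Icc 0 1 ×ˢ Icc 0 1 :=
    fun q ⟨h0, hlt, h1⟩ => ⟨⟨h0.le, by linarith⟩, ⟨by linarith, h1⟩⟩
  have hT_meas : MeasurableSet {q : ℝ × ℝ | 0 < q.1 ∧ q.1 < q.2 ∧ q.2 ≤ 1} := by
    measurability
  refine Measure.integrableOn_of_bounded (M := 1 * 1 * Mf * Mg)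
    ((measure_mono hT).trans_lt (isCompact_Icc.prod isCompact_Icc).measure_lt_top).ne
    (by unfold triangleKernel; fun_prop) ?_
  filter_upwards [ae_restrict_mem hT_meas] with ⟨s, u⟩ ⟨hs, hsu, hu⟩
  have norm_pow_le_one : ∀ x : ℝ, 0 ≤ x → x ≤ 1 → ∀ k : ℕ, ‖x ^ k‖ ≤ 1 := fun x h0 h1 k => by
    rw [norm_pow, Real.norm_eq_abs, abs_of_nonneg h0]; exact pow_le_one₀ h0 h1
  have h1 := norm_pow_le_one s hs.le (by linarith) n
  have h2 := norm_pow_le_one ((u - s) / (1 - s)) (div_nonneg (by linarith) (by linarith))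
    ((div_le_one (by linarith)).2 (by linarith)) p
  have h3 := hMf s ⟨hs.le, by linarith⟩
  have h4 := hMg u ⟨by linarith, hu⟩
  have hMf0 : 0 ≤ Mf := (norm_nonneg _).trans h3
  simp only [uncurry, triangleKernel, norm_mul]
  gcongr

end

theorem stmt_1 (f g : ℝ → ℝ) (hf : Continuous f) (hg : Continuous g) (n p : ℕ) :
    (∫ t in (0:ℝ)..1, ∫ s in (0:ℝ)..1,
        s ^ n * t ^ p * f s * g (s + t * (1 - s)) * (1 - s))
      = ∫ t' in (0:ℝ)..1, ∫ s' in (0:ℝ)..1,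
          s' ^ n * t' ^ (n + p) * ((1 - s') / (1 - s' * t')) ^ p
            * f (s' * t') * g t' * t' := by
  have h_square : IntegrableOn
      (uncurry fun t s : ℝ => s ^ n * t ^ p * f s * g (s + t * (1 - s)) * (1 - s))
      (uIoc 0 1 ×ˢ uIoc 0 1) :=
    (ContinuousOn.integrableOn_compact (isCompact_uIcc.prod isCompact_uIcc)
      (by fun_prop)).mono_set (prod_mono uIoc_subset_uIcc uIoc_subset_uIcc)
  calc _ = ∫ s in (0:ℝ)..1, ∫ t in (0:ℝ)..1,
          s ^ n * t ^ p * f s * g (s + t * (1 - s)) * (1 - s) :=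
        intervalIntegral_intervalIntegral_swap h_square
    _ = ∫ s in (0:ℝ)..1, ∫ u in s..1, triangleKernel f g n p s u := by
        simp_rw [integral_affine_comp_eq_integral_triangleKernel]
    _ = ∫ u in (0:ℝ)..1, ∫ s in (0:ℝ)..u, triangleKernel f g n p s u :=
        intervalIntegral_intervalIntegral_swap_triangle zero_le_one (integrableOn_triangleKernel n p hf hg)
    _ = _ := by simp_rw [integral_triangleKernel_eq_integral_mul_comp]
end

section
/- Let B : ℝᵈ → Matrix (Fin N) (Fin N) ℝ be smooth, ∇_μ M = ∂_μ M + [B_μ, M], and F as above. Fix y and let G_ν(x) = Σ_ρ (x-y)^ρ F_{ρν}(x). Then for any finite sequence of indices μₙ,…,μ₁: ∇_{μₙ}⋯∇_{μ₁} G_ν(x) = Σ_ρ (x-y)^ρ · ∇_{μₙ}⋯∇_{μ₁} F_{ρν}(x) + Σ_{k=1}^{n} ∇_{μₙ}⋯(omit ∇_{μ_k})⋯∇_{μ₁} F_{μ_k ν}(x). -/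
attribute [local instance] Matrix.normedAddCommGroup Matrix.normedSpace

noncomputable section

/-- Partial derivative `∂_μ M(x)` of a matrix-valued field, in the coordinate direction `μ`. -/
def pD (d N : ℕ) (μ : Fin d) (M : (Fin d → ℝ) → Matrix (Fin N) (Fin N) ℝ)
    (x : Fin d → ℝ) : Matrix (Fin N) (Fin N) ℝ :=
  fderiv ℝ M x (Pi.single μ 1)

/-- Covariant derivative `∇_μ M(x) = ∂_μ M(x) + [B_μ(x), M(x)]`. -/
def covD (d N : ℕ) (B : Fin d → (Fin d → ℝ) → Matrix (Fin N) (Fin N) ℝ) (μ : Fin d)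
    (M : (Fin d → ℝ) → Matrix (Fin N) (Fin N) ℝ) (x : Fin d → ℝ) :
    Matrix (Fin N) (Fin N) ℝ :=
  pD d N μ M x + (B μ x * M x - M x * B μ x)

/-- Field strength `F_{νμ}(x) = ∂_ν B_μ(x) - ∂_μ B_ν(x) + [B_ν(x), B_μ(x)]`. -/
def fieldStr (d N : ℕ) (B : Fin d → (Fin d → ℝ) → Matrix (Fin N) (Fin N) ℝ)
    (ν μ : Fin d) (x : Fin d → ℝ) : Matrix (Fin N) (Fin N) ℝ :=
  pD d N ν (B μ) x - pD d N μ (B ν) x + (B ν x * B μ x - B μ x * B ν x)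

/-- Iterated covariant derivative `∇_{μₙ} ⋯ ∇_{μ₁} M` for the list `[μₙ, …, μ₁]`
(outermost derivative first). -/
def covDIter (d N : ℕ) (B : Fin d → (Fin d → ℝ) → Matrix (Fin N) (Fin N) ℝ) :
    List (Fin d) → ((Fin d → ℝ) → Matrix (Fin N) (Fin N) ℝ) →
      ((Fin d → ℝ) → Matrix (Fin N) (Fin N) ℝ)
  | [], M => M
  | a :: t, M => covD d N B a (covDIter d N B t M)

end

section Aux

variable (d N : ℕ)

lemma aux_contDiff_mul {f g : (Fin d → ℝ) → Matrix (Fin N) (Fin N) ℝ}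
    (hf : ContDiff ℝ (⊤ : ℕ∞) f) (hg : ContDiff ℝ (⊤ : ℕ∞) g) :
    ContDiff ℝ (⊤ : ℕ∞) (fun x => f x * g x) := by
  refine contDiff_pi.mpr ?_; intro i; refine contDiff_pi.mpr ?_; intro j
  have h : (fun x => (f x * g x) i j) = fun x => ∑ k, f x i k * g x k j := by
    funext x; simp [Matrix.mul_apply]
  rw [h]
  exact ContDiff.sum fun k _ =>
    ((contDiff_pi.mp (contDiff_pi.mp hf i)) k).mul ((contDiff_pi.mp (contDiff_pi.mp hg k)) j)

lemma aux_contDiff_pD {μ : Fin d} {M : (Fin d → ℝ) → Matrix (Fin N) (Fin N) ℝ}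
    (hM : ContDiff ℝ (⊤ : ℕ∞) M) : ContDiff ℝ (⊤ : ℕ∞) (pD d N μ M) :=
  (hM.fderiv_right (by simp)).clm_apply contDiff_const

lemma aux_contDiff_covD {B : Fin d → (Fin d → ℝ) → Matrix (Fin N) (Fin N) ℝ}
    (hB : ∀ μ, ContDiff ℝ (⊤ : ℕ∞) (B μ)) {μ : Fin d}
    {M : (Fin d → ℝ) → Matrix (Fin N) (Fin N) ℝ} (hM : ContDiff ℝ (⊤ : ℕ∞) M) :
    ContDiff ℝ (⊤ : ℕ∞) (covD d N B μ M) :=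
  (aux_contDiff_pD d N hM).add
    ((aux_contDiff_mul d N (hB μ) hM).sub (aux_contDiff_mul d N hM (hB μ)))

lemma aux_contDiff_covDIter {B : Fin d → (Fin d → ℝ) → Matrix (Fin N) (Fin N) ℝ}
    (hB : ∀ μ, ContDiff ℝ (⊤ : ℕ∞) (B μ)) (L : List (Fin d))
    {M : (Fin d → ℝ) → Matrix (Fin N) (Fin N) ℝ} (hM : ContDiff ℝ (⊤ : ℕ∞) M) :
    ContDiff ℝ (⊤ : ℕ∞) (covDIter d N B L M) := by
  induction L with
  | nil => exact hM
  | cons a t ih => exact aux_contDiff_covD d N hB ih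

lemma aux_contDiff_fieldStr {B : Fin d → (Fin d → ℝ) → Matrix (Fin N) (Fin N) ℝ}
    (hB : ∀ μ, ContDiff ℝ (⊤ : ℕ∞) (B μ)) (ρ ν : Fin d) :
    ContDiff ℝ (⊤ : ℕ∞) (fieldStr d N B ρ ν) :=
  ((aux_contDiff_pD d N (hB ν)).sub (aux_contDiff_pD d N (hB ρ))).add
    ((aux_contDiff_mul d N (hB ρ) (hB ν)).sub (aux_contDiff_mul d N (hB ν) (hB ρ)))

lemma aux_covD_add {B : Fin d → (Fin d → ℝ) → Matrix (Fin N) (Fin N) ℝ} {μ : Fin d}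
    {M M' : (Fin d → ℝ) → Matrix (Fin N) (Fin N) ℝ}
    (hM : ContDiff ℝ (⊤ : ℕ∞) M) (hM' : ContDiff ℝ (⊤ : ℕ∞) M') (x : Fin d → ℝ) :
    covD d N B μ (fun z => M z + M' z) x = covD d N B μ M x + covD d N B μ M' x := by
  unfold covD pD
  rw [show fderiv ℝ (fun z => M z + M' z) x = fderiv ℝ M x + fderiv ℝ M' x from
    fderiv_fun_add (hM.differentiable (by simp) x) (hM'.differentiable (by simp) x)]
  simp [mul_add, add_mul]
  abel

lemma aux_covD_sum {ι : Type*} {B : Fin d → (Fin d → ℝ) → Matrix (Fin N) (Fin N) ℝ}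
    {μ : Fin d} (s : Finset ι) {M : ι → (Fin d → ℝ) → Matrix (Fin N) (Fin N) ℝ}
    (hM : ∀ ρ, ContDiff ℝ (⊤ : ℕ∞) (M ρ)) (x : Fin d → ℝ) :
    covD d N B μ (fun z => ∑ ρ ∈ s, M ρ z) x = ∑ ρ ∈ s, covD d N B μ (M ρ) x := by
  unfold covD pD
  rw [show fderiv ℝ (fun z => ∑ ρ ∈ s, M ρ z) x = ∑ ρ ∈ s, fderiv ℝ (M ρ) x from
    fderiv_fun_sum (fun ρ _ => (hM ρ).differentiable (by simp) x)]
  simp [Finset.mul_sum, Finset.sum_mul, Finset.sum_add_distrib, Finset.sum_sub_distrib]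

lemma aux_covD_smul {B : Fin d → (Fin d → ℝ) → Matrix (Fin N) (Fin N) ℝ} {μ ρ : Fin d}
    (y : Fin d → ℝ) {M : (Fin d → ℝ) → Matrix (Fin N) (Fin N) ℝ}
    (hM : ContDiff ℝ (⊤ : ℕ∞) M) (x : Fin d → ℝ) :
    covD d N B μ (fun z => (z ρ - y ρ) • M z) x
      = (x ρ - y ρ) • covD d N B μ M x + (Pi.single (M := fun _ => ℝ) μ 1 ρ) • M x := by
  unfold covD pD
  have hc : DifferentiableAt ℝ (fun z : Fin d → ℝ => z ρ - y ρ) x :=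
    (differentiable_pi.mp differentiable_id ρ x).sub_const _
  rw [show fderiv ℝ (fun z => (z ρ - y ρ) • M z) x = (x ρ - y ρ) • fderiv ℝ M x
      + (fderiv ℝ (fun z : Fin d → ℝ => z ρ - y ρ) x).smulRight (M x) from
    fderiv_fun_smul hc (hM.differentiable (by simp) x)]
  have h1 : fderiv ℝ (fun z : Fin d → ℝ => z ρ - y ρ) x = ContinuousLinearMap.proj ρ := by
    rw [fderiv_sub_const]
    exact (ContinuousLinearMap.proj ρ : (Fin d → ℝ) →L[ℝ] ℝ).fderiv
  simp only [h1, ContinuousLinearMap.add_apply, ContinuousLinearMap.coe_smul',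
    Pi.smul_apply, ContinuousLinearMap.smulRight_apply, ContinuousLinearMap.proj_apply,
    mul_smul_comm, smul_mul_assoc, smul_sub, smul_add]
  abel

/-- Key one-step Leibniz identity. -/
lemma aux_covD_key {B : Fin d → (Fin d → ℝ) → Matrix (Fin N) (Fin N) ℝ} {μ : Fin d}
    (y : Fin d → ℝ) {M : Fin d → (Fin d → ℝ) → Matrix (Fin N) (Fin N) ℝ}
    (hM : ∀ ρ, ContDiff ℝ (⊤ : ℕ∞) (M ρ)) (x : Fin d → ℝ) :
    covD d N B μ (fun z => ∑ ρ, (z ρ - y ρ) • M ρ z) x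
      = (∑ ρ, (x ρ - y ρ) • covD d N B μ (M ρ) x) + M μ x := by
  have h1 : covD d N B μ (fun z => ∑ ρ, (z ρ - y ρ) • M ρ z) x
      = ∑ ρ, covD d N B μ (fun z => (z ρ - y ρ) • M ρ z) x :=
    aux_covD_sum d N Finset.univ
      (fun ρ => (((contDiff_pi.mp contDiff_id ρ).sub contDiff_const).smul (hM ρ))) x
  rw [h1]
  have h2 : ∀ ρ : Fin d, covD d N B μ (fun z => (z ρ - y ρ) • M ρ z) x
      = (x ρ - y ρ) • covD d N B μ (M ρ) x + (Pi.single (M := fun _ => ℝ) μ 1 ρ) • M ρ x :=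
    fun ρ => aux_covD_smul d N y (hM ρ) x
  simp only [h2, Finset.sum_add_distrib]
  congr 1
  have : ∀ ρ : Fin d, (Pi.single (M := fun _ => ℝ) μ 1 ρ) • M ρ x
      = if ρ = μ then M ρ x else 0 := by
    intro ρ; rw [Pi.single_apply]; by_cases h : ρ = μ <;> simp [h]
  simp only [this, Finset.sum_ite_eq', Finset.mem_univ, if_true]

end Aux

theorem stmt_12 (d N : ℕ) (B : Fin d → (Fin d → ℝ) → Matrix (Fin N) (Fin N) ℝ)
    (hB : ∀ μ, ContDiff ℝ (⊤ : ℕ∞) (B μ)) (y : Fin d → ℝ) (ν : Fin d)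
    (L : List (Fin d)) (x : Fin d → ℝ) :
    covDIter d N B L (fun z => ∑ ρ, (z ρ - y ρ) • fieldStr d N B ρ ν z) x
      = (∑ ρ, (x ρ - y ρ) • covDIter d N B L (fun z => fieldStr d N B ρ ν z) x)
        + ∑ i : Fin L.length,
            covDIter d N B (L.eraseIdx i) (fun z => fieldStr d N B (L.get i) ν z) x := by
  induction L generalizing x with
  | nil =>
      simp [covDIter]
  | cons a t ih =>
      have hF : ∀ ρ : Fin d, ContDiff ℝ (⊤ : ℕ∞) (fieldStr d N B ρ ν) :=
        fun ρ => aux_contDiff_fieldStr d N hB ρ ν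
      have hIterF : ∀ (L' : List (Fin d)) (ρ : Fin d),
          ContDiff ℝ (⊤ : ℕ∞) (covDIter d N B L' (fun z => fieldStr d N B ρ ν z)) :=
        fun L' ρ => aux_contDiff_covDIter d N hB L' (hF ρ)
      have hfun : covDIter d N B t (fun z => ∑ ρ, (z ρ - y ρ) • fieldStr d N B ρ ν z)
          = fun z => (∑ ρ, (z ρ - y ρ) • covDIter d N B t (fun w => fieldStr d N B ρ ν w) z)
              + ∑ i : Fin t.length,
                  covDIter d N B (t.eraseIdx i) (fun w => fieldStr d N B (t.get i) ν w) z :=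
        funext fun z => ih z
      show covD d N B a (covDIter d N B t
          (fun z => ∑ ρ, (z ρ - y ρ) • fieldStr d N B ρ ν z)) x = _
      rw [hfun]
      have hsmooth1 : ContDiff ℝ (⊤ : ℕ∞) (fun z =>
          ∑ ρ, (z ρ - y ρ) • covDIter d N B t (fun w => fieldStr d N B ρ ν w) z) :=
        ContDiff.sum fun ρ _ =>
          (((contDiff_pi.mp contDiff_id ρ).sub contDiff_const).smul (hIterF t ρ))
      have hsmooth2 : ContDiff ℝ (⊤ : ℕ∞) (fun z => ∑ i : Fin t.length,
          covDIter d N B (t.eraseIdx i) (fun w => fieldStr d N B (t.get i) ν w) z) :=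
        ContDiff.sum fun i _ => hIterF (t.eraseIdx i) (t.get i)
      rw [aux_covD_add d N hsmooth1 hsmooth2 x]
      rw [aux_covD_key d N y (fun ρ => hIterF t ρ) x]
      rw [aux_covD_sum d N Finset.univ (fun i => hIterF (t.eraseIdx (i : Fin t.length))
        (t.get (i : Fin t.length))) x]
      simp only [List.length_cons]
      rw [Fin.sum_univ_succ]
      simp only [List.get_cons_zero, List.get_cons_succ, List.eraseIdx_cons_zero,
        List.eraseIdx_cons_succ, Fin.val_succ, Fin.val_zero]
      simp only [covDIter]
      abel
end

section
/- With the notation of the previous statement, evaluating at coincident points: (∇_{μₙ}⋯∇_{μ₁} G_ν)(x)|_{x=y} = Σ_{k=1}^{n} ∇_{μₙ}⋯(omit ∇_{μ_k})⋯∇_{μ₁} F_{μ_k ν}(y). -/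
attribute [local instance] Matrix.normedAddCommGroup Matrix.normedSpace

noncomputable section Aux

/-- Matrix multiplication as a continuous bilinear map (for the sup norm instances). -/
def mulCLM (N : ℕ) : Matrix (Fin N) (Fin N) ℝ →L[ℝ]
    Matrix (Fin N) (Fin N) ℝ →L[ℝ] Matrix (Fin N) (Fin N) ℝ :=
  LinearMap.toContinuousLinearMap
    { toFun := fun M => LinearMap.toContinuousLinearMap (LinearMap.mul ℝ _ M)
      map_add' := by intro a b; ext c; simp [add_mul]
      map_smul' := by intro r a; ext c; simp [smul_mul_assoc] }

lemma mulCLM_apply (N : ℕ) (M M' : Matrix (Fin N) (Fin N) ℝ) : mulCLM N M M' = M * M' := rfl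

lemma contDiff_mul' {d N : ℕ} {f g : (Fin d → ℝ) → Matrix (Fin N) (Fin N) ℝ}
    (hf : ContDiff ℝ (⊤ : ℕ∞) f) (hg : ContDiff ℝ (⊤ : ℕ∞) g) :
    ContDiff ℝ (⊤ : ℕ∞) (fun x => f x * g x) := by
  have : ContDiff ℝ (⊤ : ℕ∞) (fun x => mulCLM N (f x) (g x)) :=
    by have h := (((mulCLM N).contDiff (n := (⊤ : ℕ∞))).comp hf).clm_apply hg; exact h
  simpa [mulCLM_apply] using this

lemma contDiff_pD {d N : ℕ} (μ : Fin d) {M : (Fin d → ℝ) → Matrix (Fin N) (Fin N) ℝ}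
    (hM : ContDiff ℝ (⊤ : ℕ∞) M) : ContDiff ℝ (⊤ : ℕ∞) (pD d N μ M) :=
  (hM.fderiv_right (by simp)).clm_apply contDiff_const

lemma contDiff_covD {d N : ℕ} {B : Fin d → (Fin d → ℝ) → Matrix (Fin N) (Fin N) ℝ}
    (hB : ∀ μ, ContDiff ℝ (⊤ : ℕ∞) (B μ)) (μ : Fin d)
    {M : (Fin d → ℝ) → Matrix (Fin N) (Fin N) ℝ} (hM : ContDiff ℝ (⊤ : ℕ∞) M) :
    ContDiff ℝ (⊤ : ℕ∞) (covD d N B μ M) :=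
  (contDiff_pD μ hM).add ((contDiff_mul' (hB μ) hM).sub (contDiff_mul' hM (hB μ)))

lemma contDiff_covDIter {d N : ℕ} {B : Fin d → (Fin d → ℝ) → Matrix (Fin N) (Fin N) ℝ}
    (hB : ∀ μ, ContDiff ℝ (⊤ : ℕ∞) (B μ)) (L : List (Fin d))
    {M : (Fin d → ℝ) → Matrix (Fin N) (Fin N) ℝ} (hM : ContDiff ℝ (⊤ : ℕ∞) M) :
    ContDiff ℝ (⊤ : ℕ∞) (covDIter d N B L M) := by
  induction L with
  | nil => exact hM
  | cons a t ih => exact contDiff_covD hB a ih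

lemma contDiff_fieldStr {d N : ℕ} {B : Fin d → (Fin d → ℝ) → Matrix (Fin N) (Fin N) ℝ}
    (hB : ∀ μ, ContDiff ℝ (⊤ : ℕ∞) (B μ)) (ρ ν : Fin d) :
    ContDiff ℝ (⊤ : ℕ∞) (fieldStr d N B ρ ν) :=
  ((contDiff_pD ρ (hB ν)).sub (contDiff_pD ν (hB ρ))).add
    ((contDiff_mul' (hB ρ) (hB ν)).sub (contDiff_mul' (hB ν) (hB ρ)))


lemma clm_add_apply' {d N : ℕ} (f g : (Fin d → ℝ) →L[ℝ] Matrix (Fin N) (Fin N) ℝ) (v : Fin d → ℝ) :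
    (f + g) v = f v + g v := rfl

lemma clm_smul_apply' {d N : ℕ} (c : ℝ) (f : (Fin d → ℝ) →L[ℝ] Matrix (Fin N) (Fin N) ℝ)
    (v : Fin d → ℝ) : (c • f) v = c • f v := rfl

lemma clm_sum_apply' {d N : ℕ} {ι : Type*} (s : Finset ι)
    (f : ι → (Fin d → ℝ) →L[ℝ] Matrix (Fin N) (Fin N) ℝ) (v : Fin d → ℝ) :
    (∑ i ∈ s, f i) v = ∑ i ∈ s, f i v :=
  map_sum (ContinuousLinearMap.apply ℝ _ v) f s

lemma fderiv_sum_mat {d N : ℕ} {ι : Type*} {s : Finset ι}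
    {f : ι → (Fin d → ℝ) → Matrix (Fin N) (Fin N) ℝ} {x : Fin d → ℝ}
    (hf : ∀ i ∈ s, DifferentiableAt ℝ (f i) x) :
    fderiv ℝ (fun z => ∑ i ∈ s, f i z) x = ∑ i ∈ s, fderiv ℝ (f i) x := by
  exact fderiv_fun_sum hf

lemma fderiv_add_mat {d N : ℕ} {f g : (Fin d → ℝ) → Matrix (Fin N) (Fin N) ℝ} {x : Fin d → ℝ}
    (hf : DifferentiableAt ℝ f x) (hg : DifferentiableAt ℝ g x) :
    fderiv ℝ (fun z => f z + g z) x = fderiv ℝ f x + fderiv ℝ g x := by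
  exact fderiv_fun_add hf hg

lemma fderiv_smul_mat {d N : ℕ} {c : (Fin d → ℝ) → ℝ} {f : (Fin d → ℝ) → Matrix (Fin N) (Fin N) ℝ}
    {x : Fin d → ℝ} (hc : DifferentiableAt ℝ c x) (hf : DifferentiableAt ℝ f x) :
    fderiv ℝ (fun z => c z • f z) x = c x • fderiv ℝ f x + (fderiv ℝ c x).smulRight (f x) := by
  exact fderiv_fun_smul hc hf

/-- `covD` of a finite sum. -/
lemma covD_sum {d N : ℕ} {B : Fin d → (Fin d → ℝ) → Matrix (Fin N) (Fin N) ℝ}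
    (μ : Fin d) {ι : Type*} (s : Finset ι)
    (f : ι → (Fin d → ℝ) → Matrix (Fin N) (Fin N) ℝ) (x : Fin d → ℝ)
    (hf : ∀ i ∈ s, DifferentiableAt ℝ (f i) x) :
    covD d N B μ (fun z => ∑ i ∈ s, f i z) x = ∑ i ∈ s, covD d N B μ (f i) x := by
  unfold covD pD
  rw [fderiv_sum_mat hf, clm_sum_apply']
  simp [Finset.mul_sum, Finset.sum_mul, Finset.sum_add_distrib, Finset.sum_sub_distrib]

/-- `covD` of a function multiplied by the scalar `z ρ - y ρ`. -/
lemma covD_lin_smul {d N : ℕ} {B : Fin d → (Fin d → ℝ) → Matrix (Fin N) (Fin N) ℝ}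
    (μ ρ : Fin d) (y : Fin d → ℝ) {K : (Fin d → ℝ) → Matrix (Fin N) (Fin N) ℝ}
    (hK : ContDiff ℝ (⊤ : ℕ∞) K) (x : Fin d → ℝ) :
    covD d N B μ (fun z => (z ρ - y ρ) • K z) x
      = (x ρ - y ρ) • covD d N B μ K x + ((Pi.single μ 1 : Fin d → ℝ) ρ) • K x := by
  have hc : DifferentiableAt ℝ (fun z : Fin d → ℝ => z ρ - y ρ) x :=
    ((differentiable_pi.mp differentiable_id) ρ).differentiableAt.sub_const _
  have hKd : DifferentiableAt ℝ K x := (hK.differentiable (by simp)).differentiableAt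
  have hder : fderiv ℝ (fun z : Fin d → ℝ => z ρ - y ρ) x (Pi.single μ 1)
      = (Pi.single μ 1 : Fin d → ℝ) ρ := by
    rw [fderiv_sub_const]
    have : fderiv ℝ (fun z : Fin d → ℝ => z ρ) x = ContinuousLinearMap.proj ρ :=
      (ContinuousLinearMap.proj ρ : (Fin d → ℝ) →L[ℝ] ℝ).fderiv
    rw [this]; rfl
  unfold covD pD
  rw [fderiv_smul_mat hc hKd]
  simp only [clm_add_apply', clm_smul_apply',
    ContinuousLinearMap.smulRight_apply, hder, mul_smul_comm, smul_mul_assoc,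
    ← smul_sub, ← smul_add]
  module

/-- Key identity as a function of `x`. -/
lemma covDIter_key {d N : ℕ} {B : Fin d → (Fin d → ℝ) → Matrix (Fin N) (Fin N) ℝ}
    (hB : ∀ μ, ContDiff ℝ (⊤ : ℕ∞) (B μ)) (y : Fin d → ℝ)
    (H : Fin d → (Fin d → ℝ) → Matrix (Fin N) (Fin N) ℝ)
    (hH : ∀ ρ, ContDiff ℝ (⊤ : ℕ∞) (H ρ)) (L : List (Fin d)) (x : Fin d → ℝ) :
    covDIter d N B L (fun z => ∑ ρ, (z ρ - y ρ) • H ρ z) x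
      = (∑ ρ, (x ρ - y ρ) • covDIter d N B L (H ρ) x)
        + ∑ i : Fin L.length, covDIter d N B (L.eraseIdx i) (H (L.get i)) x := by
  induction L generalizing x with
  | nil => simp [covDIter]
  | cons a t ih =>
    have hsmooth : ∀ ρ, ContDiff ℝ (⊤ : ℕ∞) (covDIter d N B t (H ρ)) :=
      fun ρ => contDiff_covDIter hB t (hH ρ)
    have hfun : covDIter d N B t (fun z => ∑ ρ, (z ρ - y ρ) • H ρ z)
        = fun x => (∑ ρ, (x ρ - y ρ) • covDIter d N B t (H ρ) x)
            + ∑ i : Fin t.length, covDIter d N B (t.eraseIdx i) (H (t.get i)) x :=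
      funext fun x => ih x
    show covD d N B a (covDIter d N B t (fun z => ∑ ρ, (z ρ - y ρ) • H ρ z)) x = _
    rw [hfun]
    have hsum2 : ∀ i : Fin t.length,
        DifferentiableAt ℝ (covDIter d N B (t.eraseIdx i) (H (t.get i))) x := fun i =>
      ((contDiff_covDIter hB _ (hH _)).differentiable (by simp)).differentiableAt
    have hd1 : ∀ ρ : Fin d, DifferentiableAt ℝ
        (fun z => (z ρ - y ρ) • covDIter d N B t (H ρ) z) x := by
      intro ρ
      exact ((((differentiable_pi.mp differentiable_id) ρ).differentiableAt.sub_const _ :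
          DifferentiableAt ℝ (fun z : Fin d → ℝ => z ρ - y ρ) x)).smul
        (((hsmooth ρ).differentiable (by simp)).differentiableAt)
    have step : covD d N B a (fun x =>
        (∑ ρ, (x ρ - y ρ) • covDIter d N B t (H ρ) x)
          + ∑ i : Fin t.length, covDIter d N B (t.eraseIdx i) (H (t.get i)) x) x
        = covD d N B a (fun x => ∑ ρ, (x ρ - y ρ) • covDIter d N B t (H ρ) x) x
          + covD d N B a
              (fun x => ∑ i : Fin t.length, covDIter d N B (t.eraseIdx i) (H (t.get i)) x) x := by
      unfold covD pD
      rw [fderiv_add_mat (DifferentiableAt.fun_sum fun ρ _ => hd1 ρ)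
        (DifferentiableAt.fun_sum fun i _ => hsum2 i)]
      simp only [clm_add_apply', mul_add, add_mul]
      abel
    rw [step, covD_sum a Finset.univ _ x (fun ρ _ => hd1 ρ),
      covD_sum a Finset.univ _ x (fun i _ => hsum2 i)]
    have e1 : ∀ ρ, covD d N B a (fun z => (z ρ - y ρ) • covDIter d N B t (H ρ) z) x
        = (x ρ - y ρ) • covD d N B a (covDIter d N B t (H ρ)) x
          + ((Pi.single a 1 : Fin d → ℝ) ρ) • covDIter d N B t (H ρ) x :=
      fun ρ => covD_lin_smul a ρ y (hsmooth ρ) x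
    simp only [e1, Finset.sum_add_distrib]
    have e2 : (∑ ρ, ((Pi.single a 1 : Fin d → ℝ) ρ) • covDIter d N B t (H ρ) x)
        = covDIter d N B t (H a) x := by
      rw [Finset.sum_eq_single a]
      · simp
      · intro b _ hb; simp [Pi.single_apply, hb.symm]
      · simp
    rw [e2]
    simp only [List.length_cons, Fin.sum_univ_succ, Fin.val_zero, Fin.val_succ,
      List.eraseIdx_cons_zero, List.eraseIdx_cons_succ, List.get_cons_zero,
      List.get_cons_succ, covDIter]
    abel

end Aux

theorem stmt_13 (d N : ℕ) (B : Fin d → (Fin d → ℝ) → Matrix (Fin N) (Fin N) ℝ)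
    (hB : ∀ μ, ContDiff ℝ (⊤ : ℕ∞) (B μ)) (y : Fin d → ℝ) (ν : Fin d)
    (L : List (Fin d)) :
    covDIter d N B L (fun z => ∑ ρ, (z ρ - y ρ) • fieldStr d N B ρ ν z) y
      = ∑ i : Fin L.length,
          covDIter d N B (L.eraseIdx i) (fun z => fieldStr d N B (L.get i) ν z) y := by
  have := covDIter_key hB y (fun ρ => fieldStr d N B ρ ν)
    (fun ρ => contDiff_fieldStr hB ρ ν) L y
  simpa using this
end

section
/- For positive integers l, n and the map Ŝ_l^{μ_{Iₙ}ν} := (1/l)·Σ_{k=1}^{n} ∇_{μₙ}⋯(omit ∇_{μ_k})⋯∇_{μ₁} F_{μ_k ν}(x) (values in N×N real matrices), if the multi-index has the form (μ, ν, τ, τ) with the last two indices equal and summed, then Ŝ_l^{μντ τ} is symmetric under exchange of μ and ν. -/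
attribute [local instance] Matrix.normedAddCommGroup Matrix.normedSpace

/-- The evaluated integration operator
`Ŝ_l^{μ_{Iₙ}ν}(x) = (1/l) ∑_{k=1}^{n} ∇_{μₙ}⋯(omit ∇_{μ_k})⋯∇_{μ₁} F_{μ_k ν}(x)`,
where the list `L = [μₙ, …, μ₁]` records the multi-index (outermost derivative first). -/
noncomputable def Shat (d N : ℕ) (B : Fin d → (Fin d → ℝ) → Matrix (Fin N) (Fin N) ℝ)
    (l : ℕ) (L : List (Fin d)) (ν : Fin d) (x : Fin d → ℝ) :
    Matrix (Fin N) (Fin N) ℝ :=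
  (l : ℝ)⁻¹ • ∑ i : Fin L.length,
    covDIter d N B (L.eraseIdx i) (fun z => fieldStr d N B (L.get i) ν z) x

theorem stmt_19 (d N : ℕ) (B : Fin d → (Fin d → ℝ) → Matrix (Fin N) (Fin N) ℝ)
    (hB : ∀ μ, ContDiff ℝ (⊤ : ℕ∞) (B μ)) (l : ℕ) (hl : 0 < l) (μ ν : Fin d) (x : Fin d → ℝ) :
    ∑ τ, Shat d N B l [μ, ν, τ] τ x = ∑ τ, Shat d N B l [ν, μ, τ] τ x := by
  have hzero : ∀ (L : List (Fin d)),
      covDIter d N B L (fun _ => (0 : Matrix (Fin N) (Fin N) ℝ)) = fun _ => 0 := by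
    intro L
    induction L with
    | nil => rfl
    | cons a t ih =>
      funext z
      simp [covDIter, ih, covD, pD, fderiv_const]
  have hF : ∀ τ : Fin d, (fun z => fieldStr d N B τ τ z) = fun _ => (0 : Matrix (Fin N) (Fin N) ℝ) := by
    intro τ; funext z; simp [fieldStr]
  have key : ∀ a b : Fin d, ∀ τ : Fin d,
      Shat d N B l [a, b, τ] τ x =
        (l : ℝ)⁻¹ • (covDIter d N B [b, τ] (fun z => fieldStr d N B a τ z) x
          + covDIter d N B [a, τ] (fun z => fieldStr d N B b τ z) x) := by
    intro a b τ
    simp only [Shat, List.length_cons, List.length_nil, Nat.reduceAdd, Fin.sum_univ_three,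
      Fin.isValue]
    rw [show (([a, b, τ] : List (Fin d)).eraseIdx ((2 : Fin 3) : ℕ)) = [a, b] from rfl,
        show (([a, b, τ] : List (Fin d)).get (2 : Fin 3)) = τ from rfl,
        show (([a, b, τ] : List (Fin d)).eraseIdx ((0 : Fin 3) : ℕ)) = [b, τ] from rfl,
        show (([a, b, τ] : List (Fin d)).eraseIdx ((1 : Fin 3) : ℕ)) = [a, τ] from rfl,
        show (([a, b, τ] : List (Fin d)).get (0 : Fin 3)) = a from rfl,
        show (([a, b, τ] : List (Fin d)).get (1 : Fin 3)) = b from rfl,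
        hF τ, hzero [a, b]]
    simp
  calc ∑ τ, Shat d N B l [μ, ν, τ] τ x
      = ∑ τ : Fin d, (l : ℝ)⁻¹ • (covDIter d N B [ν, τ] (fun z => fieldStr d N B μ τ z) x
          + covDIter d N B [μ, τ] (fun z => fieldStr d N B ν τ z) x) := by
        refine Finset.sum_congr rfl fun τ _ => key μ ν τ
    _ = ∑ τ, Shat d N B l [ν, μ, τ] τ x := by
        refine Finset.sum_congr rfl fun τ _ => ?_
        rw [key ν μ τ, add_comm]
end
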